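/- Let u : ℝ³ → ℝ³ be continuously differentiable and divergence free, and define ψ(x) = − ∫₀¹ τ (x × u(τx)) dτ as in Lemma 2.13. Then for every x ∈ ℝ³, div ψ(x) = ∫₀¹ τ² ⟨x, (curl u)(τx)⟩ dτ, where ⟨·,·⟩ is the Euclidean inner product on ℝ³. -/

import Mathlib

open MeasureTheory Metric
open scoped ENNReal

noncomputable section

/-- Abbreviation for three-dimensional Euclidean space. -/
abbrev E3 := EuclideanSpace ℝ (Fin 3)

/-- The partial derivative in the `i`-th coordinate direction. -/
def pd {F : Type*} [NormedAddCommGroup F] [NormedSpace ℝ F]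
    (i : Fin 3) (f : E3 → F) : E3 → F :=
  fun x => fderiv ℝ f x (EuclideanSpace.single i 1)

/-- The divergence `∂₁u¹ + ∂₂u² + ∂₃u³` of a vector field on `ℝ³`. -/
def divg (u : E3 → E3) : E3 → ℝ :=
  fun x => ∑ i, pd i (fun y => u y i) x

/-- The curl `(∂₂v³ − ∂₃v², ∂₃v¹ − ∂₁v³, ∂₁v² − ∂₂v¹)` of a vector field on `ℝ³`
(with `0`-based indices). -/
def curl3 (v : E3 → E3) : E3 → E3 :=
  fun x => (WithLp.equiv 2 (Fin 3 → ℝ)).symm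
    ![pd 1 (fun y => v y 2) x - pd 2 (fun y => v y 1) x,
      pd 2 (fun y => v y 0) x - pd 0 (fun y => v y 2) x,
      pd 0 (fun y => v y 1) x - pd 1 (fun y => v y 0) x]

/-- The cross product on `ℝ³`. -/
def cross3 (a b : E3) : E3 :=
  (WithLp.equiv 2 (Fin 3 → ℝ)).symm
    ![a 1 * b 2 - a 2 * b 1, a 2 * b 0 - a 0 * b 2, a 0 * b 1 - a 1 * b 0]

/-- The stream function `ψ(x) = − ∫₀¹ τ (x × u(τx)) dτ` of Lemma 2.13. -/
def streamFun (u : E3 → E3) : E3 → E3 :=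
  fun x => - ∫ τ in (0:ℝ)..1, τ • cross3 x (u (τ • x))

lemma cross3_apply (a b : E3) (i : Fin 3) :
    cross3 a b i = ![a 1 * b 2 - a 2 * b 1, a 2 * b 0 - a 0 * b 2, a 0 * b 1 - a 1 * b 0] i := rfl

lemma coord_abs_le (x : E3) (i : Fin 3) : |x i| ≤ ‖x‖ := by
  rw [EuclideanSpace.norm_eq]
  calc |x i| = Real.sqrt (‖x i‖^2) := by rw [Real.sqrt_sq_eq_abs]; simp
  _ ≤ _ := Real.sqrt_le_sqrt (Finset.single_le_sum (f := fun j => ‖x j‖^2) (fun j _ => sq_nonneg _) (Finset.mem_univ i))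

lemma cross3_norm_le (a b : E3) : ‖cross3 a b‖ ≤ 6 * ‖a‖ * ‖b‖ := by
  have hc : ∀ i, |cross3 a b i| ≤ 2 * (‖a‖ * ‖b‖) := by
    intro i
    have h : ∀ (p q : Fin 3), |a p * b q| ≤ ‖a‖ * ‖b‖ := fun p q => by
      rw [abs_mul]
      exact mul_le_mul (coord_abs_le a p) (coord_abs_le b q) (abs_nonneg _) (norm_nonneg _)
    fin_cases i <;>
      · rw [cross3_apply]
        refine (abs_sub _ _).trans ?_
        simp only [Matrix.cons_val_zero, Matrix.cons_val_one, Matrix.head_cons, Matrix.cons_val_two, Matrix.tail_cons]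
        nlinarith [h 0 1, h 1 2, h 2 1, h 1 0, h 0 2, h 2 0]
  rw [EuclideanSpace.norm_eq]
  have h36 : (Real.sqrt (∑ i, ‖cross3 a b i‖^2)) ≤ Real.sqrt ((6 * ‖a‖ * ‖b‖)^2) := by
    apply Real.sqrt_le_sqrt
    have hsq : ∀ i : Fin 3, ‖cross3 a b i‖^2 ≤ (2 * (‖a‖*‖b‖))^2 := fun i => by
      rw [Real.norm_eq_abs]
      exact pow_le_pow_left₀ (abs_nonneg _) (hc i) 2
    calc ∑ i, ‖cross3 a b i‖^2 ≤ ∑ _i : Fin 3, (2 * (‖a‖*‖b‖))^2 := Finset.sum_le_sum (fun i _ => hsq i)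
    _ = 3 * (2 * (‖a‖*‖b‖))^2 := by rw [Fin.sum_univ_three]; ring
    _ ≤ (6 * ‖a‖ * ‖b‖)^2 := by nlinarith [mul_nonneg (norm_nonneg a) (norm_nonneg b)]
  refine h36.trans ?_
  rw [Real.sqrt_sq (by positivity)]

def crossL : E3 →L[ℝ] E3 →L[ℝ] E3 :=
  LinearMap.mkContinuous₂
    (LinearMap.mk₂ ℝ cross3
      (fun a a' b => by
        ext i; fin_cases i <;>
          simp [cross3_apply, PiLp.add_apply] <;> ring)
      (fun c a b => by
        ext i; fin_cases i <;>
          simp [cross3_apply, PiLp.smul_apply, smul_eq_mul] <;> ring)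
      (fun a b b' => by
        ext i; fin_cases i <;>
          simp [cross3_apply, PiLp.add_apply] <;> ring)
      (fun c a b => by
        ext i; fin_cases i <;>
          simp [cross3_apply, PiLp.smul_apply, smul_eq_mul] <;> ring))
    6 (fun a b => by simpa using cross3_norm_le a b)

@[simp] lemma crossL_apply (a b : E3) : crossL a b = cross3 a b := rfl

lemma norm_crossL_le : ‖crossL‖ ≤ 6 :=
  LinearMap.mkContinuous₂_norm_le _ (by norm_num) _

def Dmap (u : E3 → E3) (τ : ℝ) (x : E3) : E3 →L[ℝ] E3 :=
  τ • (crossL.flip (u (τ • x)) + τ • (crossL x).comp (fderiv ℝ u (τ • x)))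

lemma hasFDerivAt_G {u : E3 → E3} (hu : ContDiff ℝ 1 u) (τ : ℝ) (x : E3) :
    HasFDerivAt (fun y : E3 => τ • cross3 y (u (τ • y))) (Dmap u τ x) x := by
  have hud : HasFDerivAt u (fderiv ℝ u (τ • x)) (τ • x) :=
    (hu.differentiable one_ne_zero (τ • x)).hasFDerivAt
  have hsm : HasFDerivAt (fun y : E3 => τ • y) (τ • ContinuousLinearMap.id ℝ E3) x :=
    (hasFDerivAt_id x).const_smul τ
  have hg : HasFDerivAt (fun y : E3 => u (τ • y))
      ((fderiv ℝ u (τ • x)).comp (τ • ContinuousLinearMap.id ℝ E3)) x := hud.comp x hsm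
  have hb := (crossL.hasFDerivAt_of_bilinear (hasFDerivAt_id x) hg).const_smul τ
  have : HasFDerivAt (fun y : E3 => τ • cross3 y (u (τ • y)))
      (τ • (crossL.precompR E3 x ((fderiv ℝ u (τ • x)).comp (τ • ContinuousLinearMap.id ℝ E3))
        + crossL.precompL E3 (ContinuousLinearMap.id ℝ E3) (u (τ • x)))) x := hb
  refine this.congr_fderiv ?_
  ext v
  simp [Dmap, ContinuousLinearMap.precompR, ContinuousLinearMap.precompL,
    ContinuousLinearMap.smul_apply, smul_smul]
  module

lemma flip_norm_le (v : E3) : ‖crossL.flip v‖ ≤ 6 * ‖v‖ := by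
  refine ContinuousLinearMap.opNorm_le_bound _ (by positivity) fun w => ?_
  have h := cross3_norm_le w v
  have he : 6 * ‖v‖ * ‖w‖ = 6 * ‖w‖ * ‖v‖ := by ring
  rw [ContinuousLinearMap.flip_apply, crossL_apply, he]
  exact h

lemma crossL_x_norm_le (x : E3) : ‖crossL x‖ ≤ 6 * ‖x‖ := by
  refine ContinuousLinearMap.opNorm_le_bound _ (by positivity) fun w => ?_
  simpa [mul_assoc] using cross3_norm_le x w

lemma contG {u : E3 → E3} (hu : Continuous u) (x : E3) :
    Continuous fun τ : ℝ => τ • cross3 x (u (τ • x)) := by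
  have : Continuous fun τ : ℝ => τ • x := continuous_id.smul continuous_const
  exact continuous_id.smul ((crossL x).continuous.comp (hu.comp this))

lemma contD {u : E3 → E3} (hu : ContDiff ℝ 1 u) (x : E3) :
    Continuous fun τ : ℝ => Dmap u τ x := by
  have hτx : Continuous fun τ : ℝ => τ • x := continuous_id.smul continuous_const
  have h1 : Continuous fun τ : ℝ => crossL.flip (u (τ • x)) :=
    crossL.flip.continuous.comp (hu.continuous.comp hτx)
  have hf : Continuous fun τ : ℝ => fderiv ℝ u (τ • x) :=
    (hu.continuous_fderiv one_ne_zero).comp hτx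
  have h2 : Continuous fun τ : ℝ => (crossL x).comp (fderiv ℝ u (τ • x)) :=
    ((ContinuousLinearMap.compL ℝ E3 E3 E3 (crossL x)).continuous).comp hf
  exact continuous_id.smul (h1.add (continuous_id.smul h2))

lemma Dmap_bound {u : E3 → E3} (hu : ContDiff ℝ 1 u) (x₀ : E3) :
    ∃ C : ℝ, ∀ τ ∈ Set.Ioc (0:ℝ) 1, ∀ x ∈ ball x₀ 1, ‖Dmap u τ x‖ ≤ C := by
  set R := ‖x₀‖ + 1 with hR
  obtain ⟨M₀, hM₀⟩ := (isCompact_closedBall (0:E3) R).exists_bound_of_continuousOn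
    hu.continuous.continuousOn
  obtain ⟨K₀, hK₀⟩ := (isCompact_closedBall (0:E3) R).exists_bound_of_continuousOn
    (hu.continuous_fderiv one_ne_zero).continuousOn
  set M := max M₀ 0; set K := max K₀ 0
  refine ⟨6 * M + 6 * R * K, fun τ hτ x hx => ?_⟩
  have hτ1 : |τ| ≤ 1 := by rw [abs_le]; constructor <;> [linarith [hτ.1]; exact hτ.2]
  have hxR : ‖x‖ ≤ R := by
    have := norm_sub_norm_le x x₀
    have hd : ‖x - x₀‖ < 1 := mem_ball_iff_norm.mp hx
    rw [hR]; linarith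
  have hτx : τ • x ∈ closedBall (0:E3) R := by
    rw [mem_closedBall_zero_iff, norm_smul, Real.norm_eq_abs]
    nlinarith [norm_nonneg x, abs_nonneg τ]
  have hM : ‖u (τ • x)‖ ≤ M := (hM₀ _ hτx).trans (le_max_left _ _)
  have hK : ‖fderiv ℝ u (τ • x)‖ ≤ K := (hK₀ _ hτx).trans (le_max_left _ _)
  have hMn : (0:ℝ) ≤ M := le_max_right _ _
  have hKn : (0:ℝ) ≤ K := le_max_right _ _
  have hA : ‖crossL.flip (u (τ • x))‖ ≤ 6 * M := by
    have := flip_norm_le (u (τ • x)); nlinarith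
  have hB : ‖(crossL x).comp (fderiv ℝ u (τ • x))‖ ≤ 6 * R * K := by
    refine (ContinuousLinearMap.opNorm_comp_le _ _).trans ?_
    have h1 := crossL_x_norm_le x
    have hRn : (0:ℝ) ≤ R := by positivity
    nlinarith [norm_nonneg (fderiv ℝ u (τ • x)), norm_nonneg (crossL x), norm_nonneg x]
  have gen : ∀ (σ : ℝ) (A B : E3 →L[ℝ] E3) (a b : ℝ), |σ| ≤ 1 → ‖A‖ ≤ a → ‖B‖ ≤ b →
      0 ≤ a → 0 ≤ b → ‖σ • (A + σ • B)‖ ≤ a + b := by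
    intro σ A B a b h1 h2 h3 ha hb
    have e1 : ‖σ • (A + σ • B)‖ ≤ |σ| * ‖A + σ • B‖ := by
      simpa using norm_smul_le σ (A + σ • B)
    have e2 : ‖σ • B‖ ≤ |σ| * ‖B‖ := by simpa using norm_smul_le σ B
    have h4 : ‖A + σ • B‖ ≤ ‖A‖ + ‖σ • B‖ := norm_add_le _ _
    nlinarith [norm_nonneg A, norm_nonneg B, norm_nonneg (A + σ • B), abs_nonneg σ,
      norm_nonneg (σ • B)]
  rw [Dmap]
  exact gen τ _ _ _ _ hτ1 hA hB (by positivity) (by positivity)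

lemma key {u : E3 → E3} (hu : ContDiff ℝ 1 u) (x₀ : E3) :
    HasFDerivAt (fun x : E3 => ∫ τ in (0:ℝ)..1, τ • cross3 x (u (τ • x)))
      (∫ τ in (0:ℝ)..1, Dmap u τ x₀) x₀ := by
  obtain ⟨C, hC⟩ := Dmap_bound hu x₀
  refine intervalIntegral.hasFDerivAt_integral_of_dominated_of_fderiv_le
    (F := fun x τ => τ • cross3 x (u (τ • x))) (F' := fun x τ => Dmap u τ x)
    (bound := fun _ => C) (s := ball x₀ 1) (ball_mem_nhds x₀ one_pos) ?_ ?_ ?_ ?_ ?_ ?_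
  · exact Filter.Eventually.of_forall fun x =>
      ((contG hu.continuous x).aestronglyMeasurable).restrict
  · exact (contG hu.continuous x₀).intervalIntegrable _ _
  · exact ((contD hu x₀).aestronglyMeasurable).restrict
  · refine Filter.Eventually.of_forall fun τ hτ x hx => ?_
    rw [Set.uIoc_of_le zero_le_one] at hτ
    exact hC τ hτ x hx
  · exact intervalIntegrable_const
  · exact Filter.Eventually.of_forall fun τ _ x _ => hasFDerivAt_G hu τ x

lemma curl3_apply (v : E3 → E3) (x : E3) (i : Fin 3) :
    curl3 v x i = ![pd 1 (fun y => v y 2) x - pd 2 (fun y => v y 1) x,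
      pd 2 (fun y => v y 0) x - pd 0 (fun y => v y 2) x,
      pd 0 (fun y => v y 1) x - pd 1 (fun y => v y 0) x] i := rfl

lemma pd_eq {u : E3 → E3} (hu : ContDiff ℝ 1 u) (z : E3) (j k : Fin 3) :
    pd j (fun y => u y k) z = (fderiv ℝ u z (EuclideanSpace.single j 1)) k := by
  have h : HasFDerivAt (fun y => u y k)
      ((EuclideanSpace.proj k).comp (fderiv ℝ u z)) z :=
    (EuclideanSpace.proj (𝕜 := ℝ) k).hasFDerivAt.comp z (hu.differentiable one_ne_zero z).hasFDerivAt
  rw [pd, h.fderiv]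
  rfl

lemma pointwise {u : E3 → E3} (hu : ContDiff ℝ 1 u) (τ : ℝ) (x : E3) :
    (∑ i : Fin 3, -((Dmap u τ x (EuclideanSpace.single i 1)) i))
      = τ^2 * (inner ℝ x (curl3 u (τ • x)) : ℝ) := by
  have hDapp : ∀ i : Fin 3, (Dmap u τ x (EuclideanSpace.single i 1)) i
      = τ * ((cross3 (EuclideanSpace.single i 1) (u (τ • x))) i
        + τ * (cross3 x (fderiv ℝ u (τ • x) (EuclideanSpace.single i 1))) i) := by
    intro i
    rw [Dmap]
    simp [ContinuousLinearMap.smul_apply, ContinuousLinearMap.add_apply,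
      ContinuousLinearMap.flip_apply, ContinuousLinearMap.comp_apply,
      PiLp.smul_apply, PiLp.add_apply, smul_eq_mul]
    ring
  have hzero : ∀ i : Fin 3,
      (cross3 (EuclideanSpace.single i 1) (u (τ • x))) i = 0 := by
    intro i
    fin_cases i <;> rw [cross3_apply] <;>
      simp [EuclideanSpace.single_apply]
  simp only [hDapp, hzero, zero_add]
  have hw : ∀ j k : Fin 3, (fderiv ℝ u (τ • x) (EuclideanSpace.single j 1)) k
      = pd j (fun y => u y k) (τ • x) := fun j k => (pd_eq hu _ j k).symm
  rw [Fin.sum_univ_three]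
  rw [cross3_apply, cross3_apply, cross3_apply]
  simp only [PiLp.inner_apply, RCLike.inner_apply, conj_trivial]
  rw [Fin.sum_univ_three]
  simp only [hw, curl3_apply]
  simp only [Matrix.cons_val_zero, Matrix.cons_val_one, Matrix.head_cons,
    Matrix.cons_val_two, Matrix.tail_cons]
  ring

/-- **Divergence formula for the stream function** (from the proof of Lemma 2.13 of
the paper): `div ψ(x) = ∫₀¹ τ² ⟨x, (curl u)(τx)⟩ dτ`. -/
theorem stream_function_div (u : E3 → E3) (hu : ContDiff ℝ 1 u)
    (hdiv : ∀ x, divg u x = 0) :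
    ∀ x, divg (streamFun u) x
      = ∫ τ in (0:ℝ)..1, τ ^ 2 * (inner ℝ x (curl3 u (τ • x)) : ℝ) := by
  intro x₀
  have hK := key hu x₀
  have hDint : IntervalIntegrable (fun τ => Dmap u τ x₀) volume 0 1 :=
    (contD hu x₀).intervalIntegrable _ _
  have hψ : HasFDerivAt (streamFun u) (-(∫ τ in (0:ℝ)..1, Dmap u τ x₀)) x₀ := hK.neg
  have hpd : ∀ i : Fin 3, pd i (fun y => streamFun u y i) x₀ =
      -(((∫ τ in (0:ℝ)..1, Dmap u τ x₀) (EuclideanSpace.single i 1)) i) := by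
    intro i
    have hci : HasFDerivAt (fun y => streamFun u y i)
        ((EuclideanSpace.proj (𝕜 := ℝ) i).comp (-(∫ τ in (0:ℝ)..1, Dmap u τ x₀))) x₀ :=
      (EuclideanSpace.proj (𝕜 := ℝ) i).hasFDerivAt.comp x₀ hψ
    rw [pd, hci.fderiv]
    simp
  have hint_i : ∀ i : Fin 3, IntervalIntegrable
      (fun τ => Dmap u τ x₀ (EuclideanSpace.single i 1)) volume 0 1 := fun i =>
    ((ContinuousLinearMap.apply ℝ E3 (EuclideanSpace.single i 1)).continuous.comp
      (contD hu x₀)).intervalIntegrable _ _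
  have happly : ∀ i : Fin 3, ((∫ τ in (0:ℝ)..1, Dmap u τ x₀) (EuclideanSpace.single i 1)) i
      = ∫ τ in (0:ℝ)..1, (Dmap u τ x₀ (EuclideanSpace.single i 1)) i := by
    intro i
    rw [ContinuousLinearMap.intervalIntegral_apply hDint]
    exact ((EuclideanSpace.proj (𝕜 := ℝ) i).intervalIntegral_comp_comm (hint_i i)).symm
  have hintc : ∀ i : Fin 3, IntervalIntegrable
      (fun τ => -((Dmap u τ x₀ (EuclideanSpace.single i 1)) i)) volume 0 1 := fun i =>
    ((((EuclideanSpace.proj (𝕜 := ℝ) i).continuous.comp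
      ((ContinuousLinearMap.apply ℝ E3 (EuclideanSpace.single i 1)).continuous.comp
        (contD hu x₀)))).neg).intervalIntegrable _ _
  calc divg (streamFun u) x₀
      = ∑ i : Fin 3, -(((∫ τ in (0:ℝ)..1, Dmap u τ x₀) (EuclideanSpace.single i 1)) i) := by
        rw [divg]; exact Finset.sum_congr rfl fun i _ => hpd i
    _ = ∑ i : Fin 3, ∫ τ in (0:ℝ)..1, -((Dmap u τ x₀ (EuclideanSpace.single i 1)) i) := by
        refine Finset.sum_congr rfl fun i _ => ?_
        rw [happly i, ← intervalIntegral.integral_neg]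
    _ = ∫ τ in (0:ℝ)..1, ∑ i : Fin 3, -((Dmap u τ x₀ (EuclideanSpace.single i 1)) i) :=
        (intervalIntegral.integral_finset_sum (fun i _ => hintc i)).symm
    _ = _ := intervalIntegral.integral_congr fun τ _ => pointwise hu τ x₀
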